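/- Fix q > 0, a > 1 and a sequence (X_i)_{i≥1} of positive reals. Let A be the on/off process consisting of consecutive cycles where cycle i has on-period of length X_i at rate a followed by an off-period of length F_i = max((a−1)X_i, (a−1)aX_i²/(2q) − X_i), and let T′_N = Σ_{i=1}^N (X_i + F_i) and Q(t) = sup_{0≤s≤t} ∫_s^t (A(u) − 1) du. Then for every N ≥ 1 the time-averaged queue length satisfies (1/T′_N) ∫_0^{T′_N} Q(t) dt ≤ q. -/

import Mathlib

/-!
Since the off-period `F i ≥ (a - 1) X i` is long enough to empty the queue, the queue is empty at
the start `T i` of every cycle, so on the cycle `Q (T i + s) = max 0 (min ((a - 1) s) (a X i - s))`: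
a tent of height `(a - 1) X i` over `[0, a X i]`, of area `(a - 1) a X i ^ 2 / 2`. The second bound
`F i ≥ (a - 1) a X i ^ 2 / (2 q) - X i` makes this area at most `q (X i + F i)`, and summing over the
cycles gives `∫₀^{T N} Q ≤ q T N`.
-/

open MeasureTheory Set Finset

theorem ae_restrict_uIoc_eq_of_eqOn_Ico {f : ℝ → ℝ} {u t c : ℝ} (hut : u ≤ t)
    (h : EqOn f (fun _ => c) (Ico u t)) : f =ᵐ[volume.restrict (uIoc u t)] fun _ => c := by
  rw [uIoc_of_le hut, ← Measure.restrict_congr_set Ico_ae_eq_Ioc]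
  exact (ae_restrict_mem measurableSet_Ico).mono h

theorem intervalIntegrable_of_eqOn_Ico {f : ℝ → ℝ} {u t c : ℝ} (hut : u ≤ t)
    (h : EqOn f (fun _ => c) (Ico u t)) : IntervalIntegrable f volume u t :=
  intervalIntegrable_const.congr_ae (ae_restrict_uIoc_eq_of_eqOn_Ico hut h).symm

theorem integral_of_eqOn_Ico {f : ℝ → ℝ} {u t c : ℝ} (hut : u ≤ t)
    (h : EqOn f (fun _ => c) (Ico u t)) : ∫ v in u..t, f v = (t - u) * c := by
  rw [intervalIntegral.integral_congr_ae_restrict (ae_restrict_uIoc_eq_of_eqOn_Ico hut h),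
    intervalIntegral.integral_const, smul_eq_mul]

/-- `∫ (A - 1)` over the first `s` time units of a cycle with on-period `x`: it grows at rate
`a - 1` up to `s = x` and then falls at rate `1`. -/
def cycleNetInput (a x s : ℝ) : ℝ := min ((a - 1) * s) (a * x - s)

theorem cycleNetInput_sub_le {a x u s : ℝ} (ha : 1 ≤ a) (hu : 0 ≤ u) (hus : u ≤ s) :
    cycleNetInput a x s - cycleNetInput a x u ≤ max 0 (cycleNetInput a x s) := by
  unfold cycleNetInput
  -- Either the profile is still nonnegative at `u`, or `u` lies on its decreasing branch.
  rcases le_total 0 (a * x - u) with h | h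
  · have hu_nonneg : 0 ≤ min ((a - 1) * u) (a * x - u) :=
      le_min (mul_nonneg (by linarith) hu) h
    linarith [le_max_right 0 (min ((a - 1) * s) (a * x - s))]
  · have hdecr : min ((a - 1) * s) (a * x - s) ≤ min ((a - 1) * u) (a * x - u) := by
      rw [min_eq_right (by nlinarith : a * x - u ≤ (a - 1) * u)]
      exact (min_le_right _ _).trans (by linarith)
    linarith [le_max_left 0 (min ((a - 1) * s) (a * x - s))]

theorem integral_max_zero_cycleNetInput {a x L : ℝ} (ha : 1 ≤ a) (hx : 0 ≤ x)
    (hL : a * x ≤ L) :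
    ∫ s in (0 : ℝ)..L, max 0 (cycleNetInput a x s) = (a - 1) * a * x ^ 2 / 2 := by
  have hcont : Continuous fun s => max 0 (cycleNetInput a x s) := by
    unfold cycleNetInput; fun_prop
  have hxax : x ≤ a * x := le_mul_of_one_le_left hx ha
  have rise :
      ∫ s in (0 : ℝ)..x, max 0 (cycleNetInput a x s) = ∫ s in (0 : ℝ)..x, (a - 1) * s := by
    refine intervalIntegral.integral_congr fun s hs => ?_
    rw [uIcc_of_le hx] at hs
    simp only [cycleNetInput]
    rw [min_eq_left (by nlinarith [hs.2]), max_eq_right (by nlinarith [hs.1])]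
  have fall :
      ∫ s in x..a * x, max 0 (cycleNetInput a x s) = ∫ s in x..a * x, (a * x - s) := by
    refine intervalIntegral.integral_congr fun s hs => ?_
    rw [uIcc_of_le hxax] at hs
    simp only [cycleNetInput]
    rw [min_eq_right (by nlinarith [hs.1]), max_eq_right (by linarith [hs.2])]
  have idle :
      ∫ s in a * x..L, max 0 (cycleNetInput a x s) = ∫ s in a * x..L, (0 : ℝ) := by
    refine intervalIntegral.integral_congr fun s hs => ?_
    rw [uIcc_of_le hL] at hs
    exact max_eq_left ((min_le_right _ _).trans (by linarith [hs.1]))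
  rw [← intervalIntegral.integral_add_adjacent_intervals (b := x) (c := L)
      (hcont.intervalIntegrable _ _) (hcont.intervalIntegrable _ _),
    ← intervalIntegral.integral_add_adjacent_intervals (a := x) (b := a * x) (c := L)
      (hcont.intervalIntegrable _ _) (hcont.intervalIntegrable _ _), rise, fall, idle,
    intervalIntegral.integral_const_mul,
    intervalIntegral.integral_sub intervalIntegrable_const intervalIntegral.intervalIntegrable_id,
    integral_id, integral_id, intervalIntegral.integral_const, intervalIntegral.integral_zero,
    smul_eq_mul]
  ring

/-- Cycle `i` occupies `[T i, T (i + 1))`: rate `a` for time `X i`, then rate `0` for time `F i`.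
`drains` says the off-period is long enough to empty the queue built during the on-period. -/
structure IsOnOffProcess (a : ℝ) (X F T : ℕ → ℝ) (A : ℝ → ℝ) : Prop where
  one_le : 1 ≤ a
  on_nonneg : ∀ i, 0 ≤ X i
  drains : ∀ i, (a - 1) * X i ≤ F i
  start_zero : T 0 = 0
  start_succ : ∀ i, T (i + 1) = T i + (X i + F i)
  eq_on : ∀ i t, T i ≤ t → t < T i + X i → A t = a
  eq_off : ∀ i t, T i + X i ≤ t → t < T (i + 1) → A t = 0

noncomputable def queueLength (A : ℝ → ℝ) (t : ℝ) : ℝ :=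
  ⨆ u : Icc (0 : ℝ) t, ∫ v in (u : ℝ)..t, (A v - 1)

namespace IsOnOffProcess

variable {a : ℝ} {X F T : ℕ → ℝ} {A : ℝ → ℝ}

theorem start_le_on_end (hA : IsOnOffProcess a X F T A) (i : ℕ) : T i ≤ T i + X i :=
  le_add_of_nonneg_right (hA.on_nonneg i)

theorem on_end_le_start_succ (hA : IsOnOffProcess a X F T A) (i : ℕ) :
    T i + X i ≤ T (i + 1) := by
  linarith [hA.start_succ i, hA.drains i, mul_nonneg (sub_nonneg.2 hA.one_le) (hA.on_nonneg i)]

theorem monotone (hA : IsOnOffProcess a X F T A) : Monotone T :=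
  monotone_nat_of_le_succ fun i => (hA.start_le_on_end i).trans (hA.on_end_le_start_succ i)

theorem start_nonneg (hA : IsOnOffProcess a X F T A) (i : ℕ) : 0 ≤ T i :=
  hA.start_zero ▸ hA.monotone (Nat.zero_le i)

theorem eqOn_on (hA : IsOnOffProcess a X F T A) (i : ℕ) :
    EqOn (fun v => A v - 1) (fun _ => a - 1) (Ico (T i) (T i + X i)) := fun v hv => by
  simp only [hA.eq_on i v hv.1 hv.2]

theorem eqOn_off (hA : IsOnOffProcess a X F T A) (i : ℕ) :
    EqOn (fun v => A v - 1) (fun _ => -1) (Ico (T i + X i) (T (i + 1))) := fun v hv => by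
  simp only [hA.eq_off i v hv.1 hv.2, zero_sub]

theorem intervalIntegrable_cycle (hA : IsOnOffProcess a X F T A) (i : ℕ) :
    IntervalIntegrable (fun v => A v - 1) volume (T i) (T (i + 1)) :=
  (intervalIntegrable_of_eqOn_Ico (hA.start_le_on_end i) (hA.eqOn_on i)).trans
    (intervalIntegrable_of_eqOn_Ico (hA.on_end_le_start_succ i) (hA.eqOn_off i))

theorem intervalIntegrable (hA : IsOnOffProcess a X F T A) {k : ℕ} {u t : ℝ}
    (hu : u ∈ Icc 0 (T k)) (ht : t ∈ Icc 0 (T k)) :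
    IntervalIntegrable (fun v => A v - 1) volume u t := by
  have h := IntervalIntegrable.trans_iterate fun i (_ : i < k) => hA.intervalIntegrable_cycle i
  rw [hA.start_zero] at h
  refine h.mono_set (uIcc_subset_uIcc ?_ ?_) <;> rwa [uIcc_of_le (hA.start_nonneg k)]

theorem integral_from_start (hA : IsOnOffProcess a X F T A) {i : ℕ} {t : ℝ}
    (ht : t ∈ Icc (T i) (T (i + 1))) :
    ∫ v in T i..t, (A v - 1) = cycleNetInput a (X i) (t - T i) := by
  have ha : 0 ≤ a := zero_le_one.trans hA.one_le
  unfold cycleNetInput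
  rcases le_total t (T i + X i) with hon | hoff
  · rw [integral_of_eqOn_Ico ht.1 ((hA.eqOn_on i).mono (Ico_subset_Ico_right hon)),
      min_eq_left (by nlinarith)]
    ring
  · have hoff' := (hA.eqOn_off i).mono (Ico_subset_Ico_right ht.2)
    rw [← intervalIntegral.integral_add_adjacent_intervals
        (intervalIntegrable_of_eqOn_Ico (hA.start_le_on_end i) (hA.eqOn_on i))
        (intervalIntegrable_of_eqOn_Ico hoff hoff'),
      integral_of_eqOn_Ico (hA.start_le_on_end i) (hA.eqOn_on i),
      integral_of_eqOn_Ico hoff hoff',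
      min_eq_right (by nlinarith)]
    ring

theorem integral_le_of_start_le (hA : IsOnOffProcess a X F T A) {i : ℕ} {u t : ℝ}
    (ht : t ∈ Icc (T i) (T (i + 1))) (hu : u ∈ Icc (T i) t) :
    ∫ v in u..t, (A v - 1) ≤ max 0 (cycleNetInput a (X i) (t - T i)) := by
  have hTi : T i ∈ Icc 0 (T (i + 1)) := ⟨hA.start_nonneg i, hA.monotone i.le_succ⟩
  have hmem : ∀ s ∈ Icc (T i) (T (i + 1)), s ∈ Icc 0 (T (i + 1)) := fun s hs =>
    ⟨hTi.1.trans hs.1, hs.2⟩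
  have hu' : u ∈ Icc (T i) (T (i + 1)) := ⟨hu.1, hu.2.trans ht.2⟩
  rw [← intervalIntegral.integral_interval_sub_left (hA.intervalIntegrable hTi (hmem t ht))
      (hA.intervalIntegrable hTi (hmem u hu')), hA.integral_from_start ht,
    hA.integral_from_start hu']
  exact cycleNetInput_sub_le hA.one_le (sub_nonneg.2 hu.1) (by linarith [hu.2])

theorem cycleNetInput_cycle_nonpos (hA : IsOnOffProcess a X F T A) (i : ℕ) :
    cycleNetInput a (X i) (T (i + 1) - T i) ≤ 0 :=
  (min_le_right _ _).trans (by linarith [hA.start_succ i, hA.drains i])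

theorem integral_to_start_nonpos (hA : IsOnOffProcess a X F T A) {k : ℕ} {u : ℝ}
    (hu : u ∈ Icc 0 (T k)) : ∫ v in u..T k, (A v - 1) ≤ 0 := by
  induction k generalizing u with
  | zero =>
    rw [hA.start_zero] at hu ⊢
    rw [le_antisymm hu.2 hu.1, intervalIntegral.integral_same]
  | succ k ih =>
    have hend : T (k + 1) ∈ Icc (T k) (T (k + 1)) := ⟨hA.monotone k.le_succ, le_rfl⟩
    rcases le_total u (T k) with hle | hge
    · have hTk : T k ∈ Icc 0 (T (k + 1)) := ⟨hA.start_nonneg k, hend.1⟩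
      have hu' : u ∈ Icc 0 (T (k + 1)) := ⟨hu.1, hle.trans hend.1⟩
      rw [← intervalIntegral.integral_add_adjacent_intervals (hA.intervalIntegrable hu' hTk)
        (hA.intervalIntegrable hTk (Icc_subset_Icc_left hTk.1 hend)), hA.integral_from_start hend]
      linarith [ih ⟨hu.1, hle⟩, hA.cycleNetInput_cycle_nonpos k]
    · exact (hA.integral_le_of_start_le hend ⟨hge, hu.2⟩).trans_eq
        (max_eq_left (hA.cycleNetInput_cycle_nonpos k))

theorem integral_le_max (hA : IsOnOffProcess a X F T A) {i : ℕ} {u t : ℝ}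
    (ht : t ∈ Icc (T i) (T (i + 1))) (hu : u ∈ Icc 0 t) :
    ∫ v in u..t, (A v - 1) ≤ max 0 (cycleNetInput a (X i) (t - T i)) := by
  rcases le_total u (T i) with hle | hge
  · have hTi : T i ∈ Icc 0 (T (i + 1)) := ⟨hA.start_nonneg i, hA.monotone i.le_succ⟩
    rw [← intervalIntegral.integral_add_adjacent_intervals
      (hA.intervalIntegrable ⟨hu.1, hle.trans hTi.2⟩ hTi)
      (hA.intervalIntegrable hTi ⟨hTi.1.trans ht.1, ht.2⟩), hA.integral_from_start ht]
    linarith [hA.integral_to_start_nonpos ⟨hu.1, hle⟩,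
      le_max_right 0 (cycleNetInput a (X i) (t - T i))]
  · exact hA.integral_le_of_start_le ht ⟨hge, hu.2⟩

theorem queueLength_eq (hA : IsOnOffProcess a X F T A) {i : ℕ} {t : ℝ}
    (ht : t ∈ Icc (T i) (T (i + 1))) :
    queueLength A t = max 0 (cycleNetInput a (X i) (t - T i)) := by
  have ht0 : 0 ≤ t := (hA.start_nonneg i).trans ht.1
  have : Nonempty (Icc 0 t) := ⟨⟨t, ht0, le_rfl⟩⟩
  have hbound (u : Icc 0 t) :
      ∫ v in (u : ℝ)..t, (A v - 1) ≤ max 0 (cycleNetInput a (X i) (t - T i)) :=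
    hA.integral_le_max ht u.2
  have hbdd : BddAbove (range fun u : Icc 0 t => ∫ v in (u : ℝ)..t, (A v - 1)) :=
    ⟨_, forall_mem_range.2 hbound⟩
  unfold queueLength
  -- The supremum is attained at `u = t` or at `u = T i`.
  refine le_antisymm (ciSup_le hbound) (max_le ?_ ?_)
  · simpa using le_ciSup hbdd ⟨t, ht0, le_rfl⟩
  · simpa [hA.integral_from_start ht] using le_ciSup hbdd ⟨T i, hA.start_nonneg i, ht.1⟩

theorem eqOn_queueLength (hA : IsOnOffProcess a X F T A) (i : ℕ) :
    EqOn (queueLength A) (fun t => max 0 (cycleNetInput a (X i) (t - T i)))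
      (uIcc (T i) (T (i + 1))) := by
  rw [uIcc_of_le (hA.monotone i.le_succ)]
  exact fun t ht => hA.queueLength_eq ht

theorem intervalIntegrable_queueLength (hA : IsOnOffProcess a X F T A) (i : ℕ) :
    IntervalIntegrable (queueLength A) volume (T i) (T (i + 1)) := by
  have hcont : Continuous fun t => max 0 (cycleNetInput a (X i) (t - T i)) := by
    unfold cycleNetInput; fun_prop
  exact (hcont.intervalIntegrable _ _).congr ((hA.eqOn_queueLength i).symm.mono uIoc_subset_uIcc)

theorem integral_queueLength_cycle (hA : IsOnOffProcess a X F T A) (i : ℕ) :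
    ∫ t in T i..T (i + 1), queueLength A t = (a - 1) * a * X i ^ 2 / 2 := by
  rw [intervalIntegral.integral_congr (hA.eqOn_queueLength i),
    intervalIntegral.integral_comp_sub_right (fun s => max 0 (cycleNetInput a (X i) s)), sub_self]
  exact integral_max_zero_cycleNetInput hA.one_le (hA.on_nonneg i)
    (by linarith [hA.start_succ i, hA.drains i])

end IsOnOffProcess

/-- the on/off process whose `i`-th cycle is an on-period of length
`Xᵢ` at rate `a > 1` followed by an off-period of length
`Fᵢ = max((a-1)Xᵢ, (a-1)aXᵢ²/(2q) - Xᵢ)`, with cycle endpoints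
`T' N = Σ_{i<N} (Xᵢ + Fᵢ)`.  For every `N ≥ 1` the time-averaged queue length up
to `T' N` is at most `q`. -/
theorem stmt_14 (q a : ℝ) (hq : 0 < q) (ha : 1 < a)
    (X : ℕ → ℝ) (hX : ∀ i, 0 < X i)
    (F : ℕ → ℝ)
    (hF : ∀ i, F i = max ((a - 1) * X i) ((a - 1) * a * (X i) ^ 2 / (2 * q) - X i))
    (T : ℕ → ℝ) (hT : ∀ N, T N = ∑ i ∈ Finset.range N, (X i + F i))
    (A : ℝ → ℝ)
    (hAon : ∀ i, ∀ t, T i ≤ t → t < T i + X i → A t = a)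
    (hAoff : ∀ i, ∀ t, T i + X i ≤ t → t < T (i + 1) → A t = 0)
    (Q : ℝ → ℝ)
    (hQ : ∀ t, Q t = ⨆ u : Set.Icc (0:ℝ) t, ∫ v in (u : ℝ)..t, (A v - 1)) :
    ∀ N, 1 ≤ N → (1 / T N) * ∫ t in (0:ℝ)..(T N), Q t ≤ q := by
  intro N _
  have hA : IsOnOffProcess a X F T A :=
    { one_le := ha.le
      on_nonneg := fun i => (hX i).le
      drains := fun i => hF i ▸ le_max_left _ _
      start_zero := by simp [hT]
      start_succ := fun i => by rw [hT, hT, sum_range_succ]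
      eq_on := hAon
      eq_off := hAoff }
  have hQA : Q = queueLength A := funext hQ
  have hcycle (i : ℕ) : ∫ t in T i..T (i + 1), Q t ≤ q * (X i + F i) := by
    have hF' : (a - 1) * a * X i ^ 2 / (2 * q) - X i ≤ F i := hF i ▸ le_max_right _ _
    rw [hQA, hA.integral_queueLength_cycle i]
    calc (a - 1) * a * X i ^ 2 / 2 = q * ((a - 1) * a * X i ^ 2 / (2 * q)) := by field_simp
      _ ≤ q * (X i + F i) := by gcongr; linarith
  have hint : ∫ t in (0 : ℝ)..T N, Q t ≤ q * T N := by
    rw [← hA.start_zero, ← intervalIntegral.sum_integral_adjacent_intervals fun i _ =>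
      hQA ▸ hA.intervalIntegrable_queueLength i, hT, mul_sum]
    exact sum_le_sum fun i _ => hcycle i
  rw [one_div_mul_eq_div]
  exact div_le_of_le_mul₀ (hA.start_nonneg N) hq.le hint
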